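/- Let m, m₁ ∈ {0,…,N−1} with m > m₁, set δ_f = (m − m₁)/T, let k ∈ {0,…,C−1}, ν ∈ ℝ, and let τ satisfy k·T_SC ≤ τ < k·T_SC + min{T_SC − t_{m₁,1}, t_{m,1}}. Set q̃ = k + 1, E = 2·c̃₁·τ − k/Δt − ν, and Ẽ = E − 1/Δt. Then the cross-ambiguity function between the m-th and m₁-th AFDM chirp subcarriers admits the closed form A_{φ_m,φ_{m₁}}(τ, ν) = exp(2πi·(c₂·(m² − m₁²) + (m₁/T)·τ − c̃₁·τ²)) · [ Σ_{i=0}^{C−q̃} exp(−2πi·(i/Δt)·τ) · ( I(E + δ_f, t_{m₁,i} + τ, t_{m,i+q̃}) + I(Ẽ + δ_f, t_{m,i+q̃}, t_{m₁,i+1} + τ) ) + exp(−2πi·((C−q̃+1)/Δt)·τ) · I(E + δ_f, t_{m₁,C−q̃+1} + τ, T) ]. -/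

import Mathlib

/-!
Once `τ ≤ t < T`, the quadratic phases of `φ_m(t)` and `conj φ_{m₁}(t − τ)` cancel up to a term
linear in `t`, so on any interval where the wrapping indices `q_m(t)` and `q_{m₁}(t − τ)` are both
constant the integrand is a pure tone `exp(2πi(ct + d))`, whose integral is `exp(2πi d)·I(c, ·, ·)`.
Since `t_{m,q} = q·T_SC − m·Δt/C`, the index `q_m(t)` is `⌊(t + m·Δt/C)/T_SC⌋`. For `τ` in the
`k`-th window the wrapping points of `φ_m` and of the delayed `φ_{m₁}` interleave,
`t_{m₁,i} + τ ≤ t_{m,i+q̃} ≤ t_{m₁,i+1} + τ`, and `q_m(t) − q_{m₁}(t − τ)` equals `k` before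
`t_{m,i+q̃}` and `k + 1` after it; the last piece `[t_{m₁,C−k} + τ, T)` is the first kind of piece
with `t_{m,C+1} = T`.
-/

open MeasureTheory Complex Real

noncomputable section

namespace AFDM

variable (N C : ℕ) (Δt : ℝ)

/-- Frame duration `T = N·Δt`. -/
def T : ℝ := N * Δt

/-- Chirp rate parameter `c̃₁ = C/(2·T·Δt)`. -/
def ctil : ℝ := C / (2 * T N Δt * Δt)

/-- Subchirp duration `T_SC = T/C`. -/
def TSC : ℝ := T N Δt / C

/-- Spectrum wrapping points `t_{m,q}`: `t_{m,0} = 0`, `t_{m,q} = q·T/C − m·Δt/C` for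
`q = 1,…,C`, and `t_{m,C+1} = T`. -/
def tp (m q : ℕ) : ℝ :=
  if q = 0 then 0 else if q ≤ C then q * T N Δt / C - m * Δt / C else T N Δt

/-- Wrapping index function `q_m(t)`: equals `q` on `[t_{m,q}, t_{m,q+1})` for `t ∈ [0,T)`. -/
def qm (m : ℕ) (t : ℝ) : ℤ :=
  (((Finset.range (C + 1)).filter (fun q => tp N C Δt m q ≤ t)).card : ℤ) - 1

/-- The `m`-th continuous-time AFDM chirp subcarrier with parameter `c₂`:
`φ_m(t) = exp(2πi(c₂·m² + c̃₁·t² + (m/T)·t − q_m(t)·t/Δt))` on `[0,T)`, `0` otherwise. -/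
def phi (c₂ : ℝ) (m : ℕ) (t : ℝ) : ℂ :=
  if 0 ≤ t ∧ t < T N Δt then
    Complex.exp (2 * Real.pi * Complex.I *
      ((c₂ * (m : ℝ) ^ 2 + ctil N C Δt * t ^ 2 + ((m : ℝ) / T N Δt) * t
        - (qm N C Δt m t : ℝ) * t / Δt : ℝ) : ℂ))
  else 0

/-- The aperiodic ambiguity function `A_{a,b}(τ,ν) = ∫ a(t)·conj(b(t−τ))·exp(−2πiνt) dt`. -/
def AF (a b : ℝ → ℂ) (τ ν : ℝ) : ℂ :=
  ∫ t : ℝ, a t * (starRingEnd ℂ) (b (t - τ)) *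
    Complex.exp (-(2 * Real.pi * Complex.I * ((ν * t : ℝ) : ℂ)))

/-- The integral indicator `I(c, t₁, t₂)`. -/
def Iind (c t₁ t₂ : ℝ) : ℂ :=
  if c ≠ 0 then
    (Complex.exp (2 * Real.pi * Complex.I * ((c * t₂ : ℝ) : ℂ))
      - Complex.exp (2 * Real.pi * Complex.I * ((c * t₁ : ℝ) : ℂ))) /
      (2 * Real.pi * Complex.I * ((c : ℝ) : ℂ))
  else ((t₂ - t₁ : ℝ) : ℂ)

def ambiguityIntegrand (a b : ℝ → ℂ) (τ ν t : ℝ) : ℂ :=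
  a t * (starRingEnd ℂ) (b (t - τ)) * cexp (-(2 * π * I * ((ν * t : ℝ) : ℂ)))

def IsWrappingPiece (m m₁ : ℕ) (τ x y : ℝ) (j ℓ : ℕ) : Prop :=
  x ≤ y ∧ ∀ t ∈ Set.Ioo x y,
    τ ≤ t ∧ t < T N Δt ∧ qm N C Δt m t = (j + ℓ : ℕ) ∧ qm N C Δt m₁ (t - τ) = j

section

variable {N C Δt}

lemma integral_cexp_two_pi_I_mul_add (c d a b : ℝ) :
    ∫ t in a..b, cexp (2 * π * I * ((c * t + d : ℝ) : ℂ)) =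
      cexp (2 * π * I * (d : ℂ)) * Iind c a b := by
  have hfactor : ∀ t : ℝ, cexp (2 * π * I * ((c * t + d : ℝ) : ℂ)) =
      cexp (2 * π * I * (d : ℂ)) * cexp (2 * π * I * c * t) := by
    intro t
    rw [← Complex.exp_add]
    congr 1
    push_cast
    ring
  simp only [hfactor, intervalIntegral.integral_const_mul]
  congr 1
  by_cases hc : c = 0
  · simp [hc, Iind]
  · have hc' : 2 * π * I * c ≠ 0 := by simp [hc, pi_ne_zero]
    rw [integral_exp_mul_complex hc', Iind, if_pos hc]
    push_cast
    ring_nf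

lemma norm_cexp_two_pi_I_mul (x : ℝ) : ‖cexp (2 * π * I * x)‖ = 1 := by
  rw [show 2 * π * I * x = ((2 * π * x : ℝ) : ℂ) * I by push_cast; ring, norm_exp_ofReal_mul_I]

lemma AF_eq_intervalIntegral {a b : ℝ → ℂ} {τ ν L : ℝ} (hτL : τ ≤ L)
    (ha : ∀ t, L ≤ t → a t = 0) (hb : ∀ t, t < 0 → b t = 0) :
    AF a b τ ν = ∫ t in τ..L, ambiguityIntegrand a b τ ν t := by
  have hsupp : ∀ t ∉ Set.Ico τ L, ambiguityIntegrand a b τ ν t = 0 := by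
    intro t ht
    rcases lt_or_ge t τ with htτ | hτt
    · simp [ambiguityIntegrand, hb (t - τ) (by linarith)]
    · simp [ambiguityIntegrand, ha t (not_lt.mp fun h => ht ⟨hτt, h⟩)]
  rw [intervalIntegral.integral_of_le hτL, integral_Ioc_eq_integral_Ioo,
    ← integral_Ico_eq_integral_Ioo, setIntegral_eq_integral_of_forall_compl_eq_zero hsupp]
  rfl

lemma integral_eq_sum_integral_interleaved {E : Type*} [NormedAddCommGroup E] [NormedSpace ℝ E]
    {f : ℝ → E} (hf : ∀ a b, IntervalIntegrable f volume a b) (x y : ℕ → ℝ) (n : ℕ) :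
    ∫ t in x 0..y n, f t =
      ∑ i ∈ Finset.range n, ((∫ t in x i..y i, f t) + ∫ t in y i..x (i + 1), f t) +
        ∫ t in x n..y n, f t := by
  rw [← intervalIntegral.integral_add_adjacent_intervals (hf _ (x n)) (hf _ _),
    ← intervalIntegral.sum_integral_adjacent_intervals fun i _ => hf _ _]
  congr 1
  exact Finset.sum_congr rfl fun i _ =>
    (intervalIntegral.integral_add_adjacent_intervals (hf _ _) (hf _ _)).symm

lemma intervalIntegrable_ambiguityIntegrand {a b : ℝ → ℂ} (ha : Measurable a) (hb : Measurable b)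
    {A B : ℝ} (hA : ∀ t, ‖a t‖ ≤ A) (hB : ∀ t, ‖b t‖ ≤ B) (τ ν x y : ℝ) :
    IntervalIntegrable (ambiguityIntegrand a b τ ν) volume x y := by
  have hbound : ∀ t, ‖ambiguityIntegrand a b τ ν t‖ ≤ A * B := by
    intro t
    have hexp : ‖cexp (-(2 * π * I * ((ν * t : ℝ) : ℂ)))‖ = 1 := by
      rw [← mul_neg, ← ofReal_neg, norm_cexp_two_pi_I_mul]
    rw [ambiguityIntegrand, norm_mul, norm_mul, hexp, mul_one, Complex.norm_conj]
    exact mul_le_mul (hA t) (hB _) (norm_nonneg _) ((norm_nonneg _).trans (hA t))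
  have hmeas : Measurable (ambiguityIntegrand a b τ ν) := by
    unfold ambiguityIntegrand
    fun_prop
  exact ⟨Measure.integrableOn_of_bounded measure_Ioc_lt_top.ne hmeas.aestronglyMeasurable
      (ae_of_all _ hbound),
    Measure.integrableOn_of_bounded measure_Ioc_lt_top.ne hmeas.aestronglyMeasurable
      (ae_of_all _ hbound)⟩

lemma TSC_pos (hN : 0 < N) (hC : 0 < C) (hΔt : 0 < Δt) : 0 < TSC N C Δt := by
  unfold TSC T
  positivity

lemma T_eq_mul_TSC (hC : C ≠ 0) : T N Δt = C * TSC N C Δt := by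
  rw [TSC]
  field_simp

lemma tp_zero (m : ℕ) : tp N C Δt m 0 = 0 := by simp [tp]

lemma tp_of_lt {m q : ℕ} (hq : C < q) : tp N C Δt m q = T N Δt := by
  simp [tp, show q ≠ 0 by omega, show ¬q ≤ C by omega]

lemma tp_of_ne_zero_of_le {m q : ℕ} (hq₀ : q ≠ 0) (hq : q ≤ C) :
    tp N C Δt m q = q * TSC N C Δt - m * (Δt / C) := by
  simp only [tp, TSC, hq₀, hq, if_false, if_true]
  ring

lemma tp_nonneg (hΔt : 0 ≤ Δt) {m : ℕ} (hm : m ≤ N) (q : ℕ) : 0 ≤ tp N C Δt m q := by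
  rcases Nat.eq_zero_or_pos q with rfl | hq₀
  · rw [tp_zero]
  rcases le_or_gt q C with hq | hq
  · rw [tp_of_ne_zero_of_le hq₀.ne' hq, TSC, T]
    have : (m : ℝ) ≤ N := by exact_mod_cast hm
    have : (1 : ℝ) ≤ q := by exact_mod_cast hq₀
    have : 0 ≤ Δt / C := by positivity
    rw [sub_nonneg, mul_div_assoc, ← mul_assoc]
    gcongr
    nlinarith
  · rw [tp_of_lt hq, T]
    positivity

lemma mul_TSC_sub_le_tp (hΔt : 0 ≤ Δt) (m : ℕ) {q : ℕ} (hq : q ≤ C) :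
    q * TSC N C Δt - m * (Δt / C) ≤ tp N C Δt m q := by
  rcases Nat.eq_zero_or_pos q with rfl | hq₀
  · rw [tp_zero]
    simp only [CharP.cast_eq_zero, zero_mul, zero_sub, neg_nonpos]
    positivity
  · rw [tp_of_ne_zero_of_le hq₀.ne' hq]

lemma tp_le_mul_TSC (hΔt : 0 ≤ Δt) (m : ℕ) {q : ℕ} (hq : q ≤ C) :
    tp N C Δt m q ≤ q * TSC N C Δt := by
  rcases Nat.eq_zero_or_pos q with rfl | hq₀
  · simp [tp_zero]
  · rw [tp_of_ne_zero_of_le hq₀.ne' hq, sub_le_self_iff]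
    positivity

lemma tp_le_mul_TSC_sub (hC : 0 < C) (hΔt : 0 ≤ Δt) {m : ℕ} (hm : m ≤ N) {q : ℕ} (hq₀ : q ≠ 0) :
    tp N C Δt m q ≤ q * TSC N C Δt - m * (Δt / C) := by
  rcases le_or_gt q C with hq | hq
  · rw [tp_of_ne_zero_of_le hq₀ hq]
  · have hme : m * (Δt / C) ≤ TSC N C Δt := by
      rw [TSC, T, mul_div_assoc]
      gcongr
    have hqC : (C : ℝ) + 1 ≤ q := by exact_mod_cast hq
    have hs : 0 ≤ TSC N C Δt := by rw [TSC, T]; positivity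
    rw [tp_of_lt hq, T_eq_mul_TSC hC.ne']
    nlinarith

lemma tp_le_T (hC : 0 < C) (hΔt : 0 ≤ Δt) (m q : ℕ) : tp N C Δt m q ≤ T N Δt := by
  rcases le_or_gt q C with hq | hq
  · refine (tp_le_mul_TSC hΔt m hq).trans ?_
    rw [T_eq_mul_TSC hC.ne']
    have : 0 ≤ TSC N C Δt := by unfold TSC T; positivity
    gcongr
  · rw [tp_of_lt hq]

lemma delay_window_bounds (hC : 0 < C) {m m₁ k : ℕ} {τ : ℝ}
    (hτ : τ < k * TSC N C Δt + min (TSC N C Δt - tp N C Δt m₁ 1) (tp N C Δt m 1)) :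
    τ < k * TSC N C Δt + m₁ * (Δt / C) ∧ τ + m * (Δt / C) < (k + 1) * TSC N C Δt := by
  rw [tp_of_ne_zero_of_le one_ne_zero hC, tp_of_ne_zero_of_le one_ne_zero hC] at hτ
  have h := lt_min_iff.mp (sub_lt_iff_lt_add'.mpr hτ)
  constructor <;> linarith [h.1, h.2]

lemma qm_mono (m : ℕ) : Monotone (qm N C Δt m) := by
  intro t t' htt'
  unfold qm
  gcongr

lemma qm_eq_of_le_of_lt (hs : 0 < TSC N C Δt) {m j : ℕ} {t : ℝ} (hjC : j ≤ C) (ht : 0 ≤ t)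
    (hj : j * TSC N C Δt ≤ t + m * (Δt / C)) (hj' : t + m * (Δt / C) < (j + 1) * TSC N C Δt) :
    qm N C Δt m t = j := by
  have hfilter : (Finset.range (C + 1)).filter (fun q => tp N C Δt m q ≤ t) =
      Finset.range (j + 1) := by
    ext q
    simp only [Finset.mem_filter, Finset.mem_range]
    rcases Nat.eq_zero_or_pos q with rfl | hq₀
    · simp [tp_zero, ht]
    constructor
    · rintro ⟨hqC, hqt⟩
      rw [tp_of_ne_zero_of_le hq₀.ne' (by omega)] at hqt
      have : (q : ℝ) < j + 1 := lt_of_mul_lt_mul_right (by linarith) hs.le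
      exact_mod_cast this
    · intro hqj
      refine ⟨by omega, ?_⟩
      rw [tp_of_ne_zero_of_le hq₀.ne' (by omega)]
      have : (q : ℝ) ≤ j := by exact_mod_cast Nat.lt_succ_iff.mp hqj
      nlinarith
  rw [qm, hfilter, Finset.card_range]
  push_cast
  ring

lemma phi_of_mem (c₂ : ℝ) (m : ℕ) {t : ℝ} (ht : 0 ≤ t) (htT : t < T N Δt) :
    phi N C Δt c₂ m t = cexp (2 * π * I *
      ((c₂ * (m : ℝ) ^ 2 + ctil N C Δt * t ^ 2 + ((m : ℝ) / T N Δt) * t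
        - (qm N C Δt m t : ℝ) * t / Δt : ℝ) : ℂ)) :=
  if_pos ⟨ht, htT⟩

lemma phi_of_neg (c₂ : ℝ) (m : ℕ) {t : ℝ} (ht : t < 0) : phi N C Δt c₂ m t = 0 :=
  if_neg fun h => (not_le.mpr ht) h.1

lemma phi_of_le (c₂ : ℝ) (m : ℕ) {t : ℝ} (ht : T N Δt ≤ t) : phi N C Δt c₂ m t = 0 :=
  if_neg fun h => (not_lt.mpr ht) h.2

lemma norm_phi_le (c₂ : ℝ) (m : ℕ) (t : ℝ) : ‖phi N C Δt c₂ m t‖ ≤ 1 := by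
  unfold phi
  split_ifs
  · rw [norm_cexp_two_pi_I_mul]
  · simp

lemma measurable_phi (c₂ : ℝ) (m : ℕ) : Measurable (phi N C Δt c₂ m) := by
  have hqm : Measurable fun t => (qm N C Δt m t : ℝ) :=
    (Int.cast_mono.comp (qm_mono m)).measurable
  exact Measurable.ite (measurableSet_Ici.inter measurableSet_Iio) (by fun_prop) measurable_const

lemma ambiguityIntegrand_phi (c₂ ν : ℝ) (m m₁ : ℕ) {τ t : ℝ} (hτ : 0 ≤ τ) (hτt : τ ≤ t)
    (htT : t < T N Δt) :
    ambiguityIntegrand (phi N C Δt c₂ m) (phi N C Δt c₂ m₁) τ ν t =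
      cexp (2 * π * I * ((c₂ * ((m : ℝ) ^ 2 - (m₁ : ℝ) ^ 2) + ctil N C Δt * (t ^ 2 - (t - τ) ^ 2)
        + (m * t - m₁ * (t - τ)) / T N Δt
        - (qm N C Δt m t * t - qm N C Δt m₁ (t - τ) * (t - τ)) / Δt - ν * t : ℝ) : ℂ)) := by
  rw [ambiguityIntegrand, phi_of_mem c₂ m (hτ.trans hτt) htT,
    phi_of_mem c₂ m₁ (sub_nonneg.mpr hτt) (by linarith), ← Complex.exp_conj, ← Complex.exp_add,
    ← Complex.exp_add]
  congr 1
  simp only [map_mul, conj_I, conj_ofReal, map_ofNat]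
  push_cast
  ring

lemma IsWrappingPiece.integral_ambiguityIntegrand_phi {c₂ ν τ x y : ℝ} {m m₁ j ℓ : ℕ}
    (h : IsWrappingPiece N C Δt m m₁ τ x y j ℓ) (hτ : 0 ≤ τ) :
    ∫ t in x..y, ambiguityIntegrand (phi N C Δt c₂ m) (phi N C Δt c₂ m₁) τ ν t =
      cexp (2 * π * I * ((c₂ * ((m : ℝ) ^ 2 - (m₁ : ℝ) ^ 2) + ((m₁ : ℝ) / T N Δt) * τ
          - ctil N C Δt * τ ^ 2 : ℝ) : ℂ)) *
        (cexp (-(2 * π * I * (((j / Δt) * τ : ℝ) : ℂ))) *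
          Iind (2 * ctil N C Δt * τ - ℓ / Δt - ν + ((m : ℝ) - m₁) / T N Δt) x y) := by
  have heq : Set.EqOn (ambiguityIntegrand (phi N C Δt c₂ m) (phi N C Δt c₂ m₁) τ ν)
      (fun t => cexp (2 * π * I *
        (((2 * ctil N C Δt * τ - ℓ / Δt - ν + ((m : ℝ) - m₁) / T N Δt) * t
          + (c₂ * ((m : ℝ) ^ 2 - (m₁ : ℝ) ^ 2) + ((m₁ : ℝ) / T N Δt) * τ
            - ctil N C Δt * τ ^ 2 - j / Δt * τ) : ℝ) : ℂ)))
      (Set.Ioo x y) := by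
    intro t ht
    obtain ⟨hτt, htT, hq, hq₁⟩ := h.2 t ht
    rw [ambiguityIntegrand_phi c₂ ν m m₁ hτ hτt htT, hq, hq₁]
    congr 3
    push_cast
    ring
  rw [intervalIntegral.integral_congr_Ioo_of_le h.1 heq, integral_cexp_two_pi_I_mul_add,
    ← mul_assoc, ← Complex.exp_add]
  congr 2
  push_cast
  ring

variable {m m₁ k : ℕ} {τ : ℝ}

lemma isWrappingPiece_before_wrap (hΔt : 0 < Δt) (hm : m < N) (hm₁ : m₁ ≤ m)
    (hτ : k * TSC N C Δt ≤ τ) (hτ₁ : τ < k * TSC N C Δt + m₁ * (Δt / C))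
    (hτ₂ : τ + m * (Δt / C) < (k + 1) * TSC N C Δt) {i : ℕ} (hk : k < C) (hik : i + k ≤ C) :
    IsWrappingPiece N C Δt m m₁ τ (tp N C Δt m₁ i + τ) (tp N C Δt m (i + (k + 1))) i k := by
  have hC : 0 < C := by omega
  have hs := TSC_pos (Nat.zero_lt_of_lt hm) hC hΔt
  have hks : 0 ≤ k * TSC N C Δt := mul_nonneg k.cast_nonneg hs.le
  have hme : m * (Δt / C) < TSC N C Δt := by
    rw [TSC, T, mul_div_assoc]
    gcongr
  have hm₁e : m₁ * (Δt / C) ≤ m * (Δt / C) := by gcongr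
  have hx₀ := tp_nonneg hΔt.le (hm₁.trans hm.le) (C := C) i
  have hx := mul_TSC_sub_le_tp (N := N) hΔt.le m₁ (by omega : i ≤ C)
  have hy := tp_le_mul_TSC_sub hC hΔt.le hm.le (by omega : i + (k + 1) ≠ 0)
  have hyT := tp_le_T (N := N) hC hΔt.le m (i + (k + 1))
  push_cast at hy
  refine ⟨?_, fun t ⟨htx, hty⟩ => ⟨by linarith, by linarith, ?_, ?_⟩⟩
  · rcases hik.lt_or_eq with hlt | heq
    · rw [tp_of_ne_zero_of_le (m := m) (by omega) (by omega)]
      push_cast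
      linarith [tp_le_mul_TSC (N := N) hΔt.le m₁ (by omega : i ≤ C)]
    · have hiC : (C : ℝ) * TSC N C Δt = i * TSC N C Δt + k * TSC N C Δt := by
        rw [← add_mul, ← heq, Nat.cast_add]
      rw [tp_of_lt (m := m) (by omega), tp_of_ne_zero_of_le (m := m₁) (by omega) (by omega),
        T_eq_mul_TSC hC.ne']
      linarith
  · exact qm_eq_of_le_of_lt hs hik (by linarith) (by push_cast; linarith) (by push_cast; linarith)
  · exact qm_eq_of_le_of_lt hs (by omega) (by linarith) (by linarith) (by linarith)

lemma isWrappingPiece_after_wrap (hΔt : 0 < Δt) (hm : m < N) (hm₁ : m₁ ≤ m)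
    (hτ : k * TSC N C Δt ≤ τ) (hτ₁ : τ < k * TSC N C Δt + m₁ * (Δt / C))
    (hτ₂ : τ + m * (Δt / C) < (k + 1) * TSC N C Δt) {i : ℕ} (hik : i + k < C) :
    IsWrappingPiece N C Δt m m₁ τ (tp N C Δt m (i + (k + 1))) (tp N C Δt m₁ (i + 1) + τ)
      i (k + 1) := by
  have hC : 0 < C := by omega
  have hs := TSC_pos (Nat.zero_lt_of_lt hm) hC hΔt
  have hm₁e : m₁ * (Δt / C) ≤ m * (Δt / C) := by gcongr
  have hm₁e₀ : 0 ≤ m₁ * (Δt / C) := by positivity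
  have his : 0 ≤ i * TSC N C Δt := mul_nonneg i.cast_nonneg hs.le
  have hks : 0 ≤ k * TSC N C Δt := mul_nonneg k.cast_nonneg hs.le
  have hikC : ((i : ℝ) + k + 1) * TSC N C Δt ≤ C * TSC N C Δt := by
    gcongr
    exact_mod_cast hik
  rw [tp_of_ne_zero_of_le (by omega) (by omega), tp_of_ne_zero_of_le (by omega) (by omega)]
  push_cast
  refine ⟨by linarith, fun t ht => ?_⟩
  obtain ⟨htx, hty⟩ := ht
  refine ⟨by linarith, ?_, ?_, ?_⟩
  · rw [T_eq_mul_TSC hC.ne']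
    linarith
  · exact qm_eq_of_le_of_lt hs (by omega) (by linarith) (by push_cast; linarith)
      (by push_cast; linarith)
  · exact qm_eq_of_le_of_lt hs (by omega) (by linarith) (by linarith) (by linarith)

end

theorem caf_closed_form_general
    (N C : ℕ) (Δt : ℝ) (hΔt : 0 < Δt) (c₂ : ℝ) (m m₁ k : ℕ) (hm : m < N)
    (hmm₁ : m₁ < m) (hk : k < C) (ν τ : ℝ)
    (hτ1 : (k : ℝ) * TSC N C Δt ≤ τ)
    (hτ2 : τ < (k : ℝ) * TSC N C Δt +
      min (TSC N C Δt - tp N C Δt m₁ 1) (tp N C Δt m 1)) :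
    AF (phi N C Δt c₂ m) (phi N C Δt c₂ m₁) τ ν =
      Complex.exp (2 * Real.pi * Complex.I *
          ((c₂ * ((m : ℝ) ^ 2 - (m₁ : ℝ) ^ 2) + ((m₁ : ℝ) / T N Δt) * τ
            - ctil N C Δt * τ ^ 2 : ℝ) : ℂ)) *
        ((∑ i ∈ Finset.range (C - k),
            Complex.exp (-(2 * Real.pi * Complex.I * ((((i : ℝ) / Δt) * τ : ℝ) : ℂ))) *
              (Iind (2 * ctil N C Δt * τ - (k : ℝ) / Δt - ν + ((m : ℝ) - (m₁ : ℝ)) / T N Δt)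
                  (tp N C Δt m₁ i + τ) (tp N C Δt m (i + (k + 1))) +
                Iind (2 * ctil N C Δt * τ - (k : ℝ) / Δt - ν - 1 / Δt
                    + ((m : ℝ) - (m₁ : ℝ)) / T N Δt)
                  (tp N C Δt m (i + (k + 1))) (tp N C Δt m₁ (i + 1) + τ))) +
          Complex.exp (-(2 * Real.pi * Complex.I *
              (((((C - k : ℕ) : ℝ)) / Δt * τ : ℝ) : ℂ))) *
            Iind (2 * ctil N C Δt * τ - (k : ℝ) / Δt - ν + ((m : ℝ) - (m₁ : ℝ)) / T N Δt)
              (tp N C Δt m₁ (C - k) + τ) (T N Δt)) := by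
  have hC : 0 < C := Nat.zero_lt_of_lt hk
  obtain ⟨hτ₁, hτ₂⟩ := delay_window_bounds hC hτ2
  have hτ : 0 ≤ τ :=
    (mul_nonneg k.cast_nonneg (TSC_pos (Nat.zero_lt_of_lt hm) hC hΔt).le).trans hτ1
  have before_wrap {i : ℕ} (hi : i + k ≤ C) :=
    isWrappingPiece_before_wrap hΔt hm hmm₁.le hτ1 hτ₁ hτ₂ hk hi
  have after_wrap {i : ℕ} (hi : i + k < C) :=
    isWrappingPiece_after_wrap hΔt hm hmm₁.le hτ1 hτ₁ hτ₂ hi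
  have hT : tp N C Δt m (C - k + (k + 1)) = T N Δt := tp_of_lt (by omega)
  have hint : ∀ x y, IntervalIntegrable
      (ambiguityIntegrand (phi N C Δt c₂ m) (phi N C Δt c₂ m₁) τ ν) volume x y :=
    intervalIntegrable_ambiguityIntegrand (measurable_phi c₂ m) (measurable_phi c₂ m₁)
      (norm_phi_le c₂ m) (norm_phi_le c₂ m₁) τ ν
  have hsplit := integral_eq_sum_integral_interleaved hint
    (fun i => tp N C Δt m₁ i + τ) (fun i => tp N C Δt m (i + (k + 1))) (C - k)
  rw [tp_zero, zero_add] at hsplit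
  have hcoef : 2 * ctil N C Δt * τ - ((k + 1 : ℕ) : ℝ) / Δt - ν + ((m : ℝ) - m₁) / T N Δt =
      2 * ctil N C Δt * τ - k / Δt - ν - 1 / Δt + ((m : ℝ) - m₁) / T N Δt := by
    push_cast
    ring
  have hτT : τ ≤ tp N C Δt m (C - k + (k + 1)) :=
    (le_add_of_nonneg_left (tp_nonneg hΔt.le (hmm₁.trans hm).le _)).trans
      (before_wrap (by omega)).1
  rw [AF_eq_intervalIntegral hτT (fun t ht => phi_of_le c₂ m (hT ▸ ht))
      (fun t => phi_of_neg c₂ m₁), hsplit,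
    (before_wrap (by omega)).integral_ambiguityIntegrand_phi hτ, hT, mul_add,
    Finset.mul_sum]
  congr 1
  refine Finset.sum_congr rfl fun i hi => ?_
  have hik : i + k < C := by rw [Finset.mem_range] at hi; omega
  rw [(before_wrap hik.le).integral_ambiguityIntegrand_phi hτ,
    (after_wrap hik).integral_ambiguityIntegrand_phi hτ, hcoef]
  ring

/-- Closed form of the cross-ambiguity function between the `m`-th and `m₁`-th AFDM chirp
subcarriers (`m > m₁`, frequency difference `δ_f = (m − m₁)/T`) for `τ` in the `k`-th
subchirp window, with `q̃ = k + 1`, `E = 2·c̃₁·τ − k/Δt − ν` and `Ẽ = E − 1/Δt`. -/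
theorem caf_closed_form
    (N C : ℕ) (hN : 0 < N) (hNeven : Even N) (hC : 0 < C)
    (Δt : ℝ) (hΔt : 0 < Δt) (c₂ : ℝ) (m m₁ k : ℕ) (hm : m < N) (hm₁ : m₁ < N)
    (hmm₁ : m₁ < m) (hk : k < C) (ν τ : ℝ)
    (hτ1 : (k : ℝ) * TSC N C Δt ≤ τ)
    (hτ2 : τ < (k : ℝ) * TSC N C Δt +
      min (TSC N C Δt - tp N C Δt m₁ 1) (tp N C Δt m 1)) :
    AF (phi N C Δt c₂ m) (phi N C Δt c₂ m₁) τ ν =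
      Complex.exp (2 * Real.pi * Complex.I *
          ((c₂ * ((m : ℝ) ^ 2 - (m₁ : ℝ) ^ 2) + ((m₁ : ℝ) / T N Δt) * τ
            - ctil N C Δt * τ ^ 2 : ℝ) : ℂ)) *
        ((∑ i ∈ Finset.range (C - k),
            Complex.exp (-(2 * Real.pi * Complex.I * ((((i : ℝ) / Δt) * τ : ℝ) : ℂ))) *
              (Iind (2 * ctil N C Δt * τ - (k : ℝ) / Δt - ν + ((m : ℝ) - (m₁ : ℝ)) / T N Δt)
                  (tp N C Δt m₁ i + τ) (tp N C Δt m (i + (k + 1))) +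
                Iind (2 * ctil N C Δt * τ - (k : ℝ) / Δt - ν - 1 / Δt
                    + ((m : ℝ) - (m₁ : ℝ)) / T N Δt)
                  (tp N C Δt m (i + (k + 1))) (tp N C Δt m₁ (i + 1) + τ))) +
          Complex.exp (-(2 * Real.pi * Complex.I *
              (((((C - k : ℕ) : ℝ)) / Δt * τ : ℝ) : ℂ))) *
            Iind (2 * ctil N C Δt * τ - (k : ℝ) / Δt - ν + ((m : ℝ) - (m₁ : ℝ)) / T N Δt)
              (tp N C Δt m₁ (C - k) + τ) (T N Δt)) :=
  caf_closed_form_general N C Δt hΔt c₂ m m₁ k hm hmm₁ hk ν τ hτ1 hτ2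

end AFDM
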